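/- arXiv:1008.4234 — 2 statements merged into one kernel-verified Lean document; each statement's English description precedes it below -/
import Mathlib

section
/- There exists a unique power series exp(x) = x + e_1 x^q + e_2 x^{q^2} + ... with coefficients e_i in k(t) (constant coefficient of x equal to 1, and only terms of degree q^i appearing) satisfying the functional equation exp(t·x) = t·exp(x) + (exp x)^q as formal power series. -/
/-!
In characteristic `p`, raising to a power `q = p ^ n` acts on coefficients as
`coeff m (f ^ q) = coeff (m / q) f ^ q` when `q ∣ m` (and `0` otherwise). Comparing coefficients,
the functional equation `f(t x) = t f(x) + f(x) ^ q` therefore says exactly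
`(t ^ m - t) * coeff m f = [q ∣ m] coeff (m / q) f ^ q` for every `m`. Since `t = X` satisfies
`t ^ m ≠ t` for `m ≥ 2`, this determines the coefficient of `x ^ (q ^ (i + 1))` from that of
`x ^ (q ^ i)`, which gives existence by recursion and uniqueness by induction.
-/

theorem Nat.div_ne_pow_of_forall_ne_pow {q m : ℕ} (hqm : q ∣ m) (hm : ∀ i, m ≠ q ^ i) (j : ℕ) :
    m / q ≠ q ^ j := by
  intro h
  exact hm (j + 1) (by rw [← Nat.div_mul_cancel hqm, h, pow_succ])

namespace PowerSeries

section ExpChar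

variable {R : Type*} [CommRing R] (p : ℕ) [ExpChar R p]

theorem map_iterateFrobenius_expand (f : R⟦X⟧) (n : ℕ) :
    map (iterateFrobenius R p n) (expand (p ^ n) (pow_ne_zero n (expChar_ne_zero R p)) f) =
      f ^ p ^ n :=
  MvPowerSeries.map_iterateFrobenius_expand p (expChar_ne_zero R p) f n

theorem coeff_pow_expChar_pow (f : R⟦X⟧) (n m : ℕ) :
    coeff m (f ^ p ^ n) = if p ^ n ∣ m then coeff (m / p ^ n) f ^ p ^ n else 0 := by
  rw [← map_iterateFrobenius_expand, coeff_map, coeff_expand]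
  split_ifs <;> simp only [iterateFrobenius_def, map_zero]

theorem rescale_eq_smul_add_pow_expChar_pow_iff (n : ℕ) (t : R) (f : R⟦X⟧) :
    rescale t f = t • f + f ^ p ^ n ↔
      ∀ m, (t ^ m - t) * coeff m f = if p ^ n ∣ m then coeff (m / p ^ n) f ^ p ^ n else 0 := by
  rw [PowerSeries.ext_iff]
  refine forall_congr' fun m => ?_
  rw [coeff_rescale, map_add, coeff_smul, coeff_pow_expChar_pow, smul_eq_mul, sub_mul,
    sub_eq_iff_eq_add']

end ExpChar

section Carlitz

variable {F : Type*} [Field F]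

/-- The coefficient `e i` of `x ^ (q ^ i)`: the functional equation at `x ^ (q ^ (i + 1))` reads
`(t ^ q ^ (i + 1) - t) * e (i + 1) = e i ^ q`. -/
def carlitzCoeff (t : F) (q : ℕ) : ℕ → F
  | 0 => 1
  | i + 1 => carlitzCoeff t q i ^ q / (t ^ q ^ (i + 1) - t)

/-- `q ^ Nat.log q m = m` is a decidable way of saying that `m` is a power of `q`. -/
def carlitzExp (t : F) (q : ℕ) : F⟦X⟧ :=
  mk fun m => if q ^ Nat.log q m = m then carlitzCoeff t q (Nat.log q m) else 0

variable {t : F} {q : ℕ}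

theorem coeff_carlitzExp_pow (hq : 1 < q) (i : ℕ) :
    coeff (q ^ i) (carlitzExp t q) = carlitzCoeff t q i := by
  rw [carlitzExp, coeff_mk, Nat.log_pow hq, if_pos rfl]

theorem coeff_carlitzExp_of_forall_ne {m : ℕ} (hm : ∀ i, m ≠ q ^ i) :
    coeff m (carlitzExp t q) = 0 := by
  rw [carlitzExp, coeff_mk, if_neg fun h => hm _ h.symm]

theorem carlitzCoeff_succ_mul {i : ℕ} (ht : t ^ q ^ (i + 1) ≠ t) :
    carlitzCoeff t q (i + 1) * (t ^ q ^ (i + 1) - t) = carlitzCoeff t q i ^ q :=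
  div_mul_cancel₀ _ (sub_ne_zero.2 ht)

variable (p : ℕ) [ExpChar F p] {n : ℕ}

theorem rescale_carlitzExp (hq : 1 < p ^ n) (ht : ∀ i, t ^ (p ^ n) ^ (i + 1) ≠ t) :
    rescale t (carlitzExp t (p ^ n)) =
      t • carlitzExp t (p ^ n) + carlitzExp t (p ^ n) ^ p ^ n := by
  rw [rescale_eq_smul_add_pow_expChar_pow_iff]
  intro m
  by_cases hm : ∃ i, m = (p ^ n) ^ i
  · obtain ⟨_ | i, rfl⟩ := hm
    · rw [pow_zero, pow_one, sub_self, zero_mul, if_neg (Nat.not_dvd_of_pos_of_lt one_pos hq)]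
    · rw [if_pos (dvd_pow_self _ i.succ_ne_zero), pow_succ, Nat.mul_div_cancel _ (by omega),
        ← pow_succ, coeff_carlitzExp_pow hq, coeff_carlitzExp_pow hq, mul_comm,
        carlitzCoeff_succ_mul (ht i)]
  · push Not at hm
    rw [coeff_carlitzExp_of_forall_ne hm, mul_zero]
    split_ifs with hqm
    · rw [coeff_carlitzExp_of_forall_ne (Nat.div_ne_pow_of_forall_ne_pow hqm hm),
        zero_pow (by omega)]
    · rfl

theorem eq_of_rescale_eq_smul_add_pow (hq : 1 < p ^ n) (ht : ∀ i, t ^ (p ^ n) ^ (i + 1) ≠ t)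
    {f g : F⟦X⟧} (hf : rescale t f = t • f + f ^ p ^ n) (hg : rescale t g = t • g + g ^ p ^ n)
    (hf0 : ∀ m, (∀ i, m ≠ (p ^ n) ^ i) → coeff m f = 0)
    (hg0 : ∀ m, (∀ i, m ≠ (p ^ n) ^ i) → coeff m g = 0) (h1 : coeff 1 f = coeff 1 g) :
    f = g := by
  rw [rescale_eq_smul_add_pow_expChar_pow_iff] at hf hg
  ext m
  induction m using Nat.strong_induction_on with
  | _ m ih =>
    by_cases hm : ∃ i, m = (p ^ n) ^ i
    · obtain ⟨_ | i, rfl⟩ := hm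
      · rwa [pow_zero]
      · refine mul_left_cancel₀ (sub_ne_zero.2 (ht i)) ?_
        have hdiv : (p ^ n) ^ (i + 1) / p ^ n = (p ^ n) ^ i := by
          rw [pow_succ, Nat.mul_div_cancel _ (by omega)]
        rw [hf, hg, hdiv, ih _ (Nat.pow_lt_pow_right hq i.lt_succ_self)]
    · push Not at hm
      rw [hf0 m hm, hg0 m hm]

theorem existsUnique_rescale_eq_smul_add_pow (hq : 1 < p ^ n)
    (ht : ∀ i, t ^ (p ^ n) ^ (i + 1) ≠ t) :
    ∃! f : F⟦X⟧, coeff 1 f = 1 ∧ (∀ m, (∀ i, m ≠ (p ^ n) ^ i) → coeff m f = 0) ∧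
      rescale t f = t • f + f ^ p ^ n := by
  have h1 : coeff 1 (carlitzExp t (p ^ n)) = 1 := by
    simpa [carlitzCoeff] using coeff_carlitzExp_pow (t := t) hq 0
  refine ⟨carlitzExp t (p ^ n), ⟨h1, fun _ => coeff_carlitzExp_of_forall_ne,
    rescale_carlitzExp p hq ht⟩, fun g ⟨hg1, hg0, hg⟩ => ?_⟩
  exact eq_of_rescale_eq_smul_add_pow p hq ht hg (rescale_carlitzExp p hq ht) hg0
    (fun _ => coeff_carlitzExp_of_forall_ne) (hg1.trans h1.symm)

end Carlitz

end PowerSeries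

theorem RatFunc.X_pow_ne_X {K : Type*} [Field K] {N : ℕ} (hN : N ≠ 1) :
    (RatFunc.X : RatFunc K) ^ N ≠ RatFunc.X := by
  rw [← RatFunc.algebraMap_X, ← map_pow, Ne, (RatFunc.algebraMap_injective K).eq_iff]
  intro h
  simpa [hN] using congrArg Polynomial.natDegree h

/-- There exists a unique power series
`exp(x) = x + e₁ x^q + e₂ x^{q²} + ⋯` with coefficients in `F = k(t)`
(coefficient of `x` equal to `1`, and only terms of degree `q^i` appearing)
satisfying `exp(t·x) = t·exp(x) + (exp x)^q` as formal power series. -/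
theorem carlitz_exponential_exists_unique
    (k : Type*) [Field k] [Fintype k] (q : ℕ) (hq : q = Fintype.card k) :
    ∃! f : PowerSeries (RatFunc k),
      (PowerSeries.coeff 1 f = 1) ∧
      (∀ n : ℕ, (∀ i : ℕ, n ≠ q ^ i) → PowerSeries.coeff n f = 0) ∧
      PowerSeries.rescale (RatFunc.X : RatFunc k) f = (RatFunc.X : RatFunc k) • f + f ^ q := by
  have := ringChar.charP k
  obtain ⟨n, hp, hcard⟩ := FiniteField.card k (ringChar k)
  have := Fact.mk hp
  have hq1 : 1 < q := hq ▸ Fintype.one_lt_card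
  rw [hq, hcard] at hq1 ⊢
  exact PowerSeries.existsUnique_rescale_eq_smul_add_pow (ringChar k) hq1
    fun i => RatFunc.X_pow_ne_X (Nat.one_lt_pow i.succ_ne_zero hq1).ne'
end

section
/- For every i ≥ 0, the coefficient e_i of the Carlitz exponential satisfies |e_i| = |t|^{-i q^i}, where |·| is an absolute value on k(t) (extended to a completion) with |t| > 1 corresponding to the place at infinity. -/
/-- For every `i ≥ 0` the coefficient `e_i` of the Carlitz
exponential satisfies `|e_i| = |t|^{-i q^i}`, for the absolute value at
infinity on `k(t)` (with `|t| = c > 1` and `|f| = c^{deg f}` for polynomials). -/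
theorem carlitz_exponential_coeff_abs
    (k : Type*) [Field k] [Fintype k] (q : ℕ) (hq : q = Fintype.card k)
    (v : AbsoluteValue (RatFunc k) ℝ) (c : ℝ) (hc : 1 < c)
    (ht : v (RatFunc.X : RatFunc k) = c)
    (hpoly : ∀ p : Polynomial k, p ≠ 0 →
      v (algebraMap (Polynomial k) (RatFunc k) p) = c ^ p.natDegree)
    (e : ℕ → RatFunc k)
    (he0 : e 0 = 1)
    (herec : ∀ i : ℕ, 1 ≤ i →
      e i * ((RatFunc.X : RatFunc k) ^ (q ^ i) - RatFunc.X) = e (i - 1) ^ q) :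
    ∀ i : ℕ, v (e i) = c ^ (-(i * q ^ i : ℤ)) := by
  have hc0 : (0:ℝ) < c := lt_trans one_pos hc
  have hcne : c ≠ 0 := ne_of_gt hc0
  have hq2 : 2 ≤ q := by rw [hq]; exact Fintype.one_lt_card
  intro i
  induction i with
  | zero => simp [he0]
  | succ i ih =>
    set n := q ^ (i+1) with hn
    have hn2 : 2 ≤ n := le_trans hq2 (Nat.le_self_pow (by omega) q)
    have hp : (Polynomial.X ^ n - Polynomial.X : Polynomial k) ≠ 0 := by
      intro h
      have h2 := congrArg (fun p => Polynomial.coeff p n) h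
      simp only [Polynomial.coeff_sub, Polynomial.coeff_X_pow, Polynomial.coeff_X,
        if_pos rfl, if_neg (by omega : ¬ (1 = n)), Polynomial.coeff_zero, sub_zero] at h2
      exact one_ne_zero h2
    have hdeg : (Polynomial.X ^ n - Polynomial.X : Polynomial k).natDegree = n := by
      rw [Polynomial.natDegree_sub_eq_left_of_natDegree_lt] <;>
        simp [Polynomial.natDegree_X_pow]
      omega
    have hvD : v ((RatFunc.X : RatFunc k) ^ n - RatFunc.X) = c ^ n := by
      have h3 := hpoly _ hp
      rw [map_sub, map_pow, RatFunc.algebraMap_X] at h3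
      rw [h3, hdeg]
    have heq := herec (i+1) (by omega)
    simp only [Nat.add_sub_cancel] at heq
    have h4 := congrArg v heq
    rw [map_mul, map_pow, hvD, ih] at h4
    have hcn : (c:ℝ) ^ n ≠ 0 := pow_ne_zero _ hcne
    have key : v (e (i+1)) = (c ^ (-(i * q^i : ℤ)))^q / c^n :=
      eq_div_of_mul_eq hcn h4
    rw [key, ← zpow_natCast (c ^ (-(i * q^i : ℤ))) q, ← zpow_mul,
      ← zpow_natCast c n, ← zpow_sub₀ hcne]
    congr 1
    push_cast [hn]
    ring
end
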